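/- arXiv:2309.10500 — 2 statements merged into one kernel-verified Lean document; each statement's English description precedes it below -/
import Mathlib

section
/- Let d ≥ 3 and let f : ℝ^d → ℂ be spherically symmetric with |f|² ∈ L¹(ℝ^d), and set h = F⁻¹(|f|²). Assume ∫_{ℝ^d} |h(x)| |x|^{2−d} dx < ∞. Then for every ω ∈ ℝ and every k ∈ ℝ^d∖{0}, the integral defining the Lindhard function m_f(ω,k) converges absolutely and |m_f(ω,k)| ≤ (1/(2σ(𝕊^{d−1}))) ∫_{ℝ^d} |h(x)| |x|^{2−d} dx, where σ(𝕊^{d−1}) is the surface measure of the unit sphere in ℝ^d. -/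
open MeasureTheory Filter
open scoped ENNReal NNReal ComplexConjugate Classical

noncomputable section

/-- Euclidean space `ℝ^d`. -/
abbrev Ed (d : ℕ) : Type := EuclideanSpace ℝ (Fin d)

/-- Fourier transform `ĝ(ξ) = ∫ g(x) e^{−i x·ξ} dx`. -/
def FT {d : ℕ} (g : Ed d → ℂ) (ξ : Ed d) : ℂ :=
  ∫ x : Ed d, Complex.exp (-Complex.I * ((@inner ℝ _ _ x ξ : ℝ) : ℂ)) * g x

/-- Inverse Fourier transform `F⁻¹g(x) = (2π)^{−d} ∫ g(ξ) e^{i x·ξ} dξ`. -/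
def invFT {d : ℕ} (g : Ed d → ℂ) (x : Ed d) : ℂ :=
  (((2 * Real.pi) ^ d : ℝ) : ℂ)⁻¹ *
    ∫ ξ : Ed d, Complex.exp (Complex.I * ((@inner ℝ _ _ x ξ : ℝ) : ℂ)) * g ξ

/-- Propagator `S(t) = e^{−it(m−Δ)}`, i.e. `S(t)u = F⁻¹(e^{−it(m+|ξ|²)} û)`. -/
def Sprop {d : ℕ} (m t : ℝ) (u : Ed d → ℂ) : Ed d → ℂ :=
  invFT (fun ξ => Complex.exp (-Complex.I * (t : ℂ) * ((m : ℂ) + ((‖ξ‖ ^ 2 : ℝ) : ℂ))) * FT u ξ)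

/-- Bessel potential `⟨∇⟩^s u = F⁻¹(⟨·⟩^s û)`. -/
def bessel {d : ℕ} (s : ℝ) (u : Ed d → ℂ) : Ed d → ℂ :=
  invFT (fun ξ => ((((1 + ‖ξ‖ ^ 2) ^ (s / 2) : ℝ)) : ℂ) * FT u ξ)

/-- `L^p` norm of an `ℝ≥0∞`-valued function. -/
def eLp {α : Type*} [MeasurableSpace α] (μ : Measure α) (p : ℝ≥0∞) (f : α → ℝ≥0∞) : ℝ≥0∞ :=
  if p = 0 then 0
  else if p = ∞ then essSup f μ
  else (∫⁻ a, f a ^ p.toReal ∂μ) ^ (1 / p.toReal)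

/-- Mixed norm `L^p_t L^q_x`. -/
def mixLp {d : ℕ} (p q : ℝ≥0∞) (u : ℝ → Ed d → ℂ) : ℝ≥0∞ :=
  eLp volume p (fun t => eLpNorm (u t) q volume)

/-- Mixed norm `L^p_t H^{s,q}_x`. -/
def mixSob {d : ℕ} (p q : ℝ≥0∞) (s : ℝ) (u : ℝ → Ed d → ℂ) : ℝ≥0∞ :=
  mixLp p q (fun t => bessel s (u t))

/-- Mixed norm `L^p_t L^q_x L²_ω`. -/
def probLp {d : ℕ} {Ω : Type*} [MeasurableSpace Ω] (P : Measure Ω) (p q : ℝ≥0∞)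
    (u : ℝ → Ed d → Ω → ℂ) : ℝ≥0∞ :=
  eLp volume p (fun t => eLp volume q (fun x => eLpNorm (u t x) 2 P))

/-- Mixed norm `L^p_t H^{s,q}_x L²_ω` (Bessel potential acting in `x`, `ω`-wise). -/
def probSob {d : ℕ} {Ω : Type*} [MeasurableSpace Ω] (P : Measure Ω) (p q : ℝ≥0∞) (s : ℝ)
    (u : ℝ → Ed d → Ω → ℂ) : ℝ≥0∞ :=
  probLp P p q (fun t x ω => bessel s (fun y => u t y ω) x)

/-- Littlewood–Paley projection `u_j = F⁻¹(η(2^{−j}·) û)`. -/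
def LPproj {d : ℕ} (η : Ed d → ℝ) (j : ℤ) (u : Ed d → ℂ) : Ed d → ℂ :=
  invFT (fun ξ => ((η ((2 : ℝ) ^ (-j) • ξ) : ℝ) : ℂ) * FT u ξ)

/-- Inhomogeneous Besov norm `B₂^{s,t}` built from a Littlewood–Paley function `η`. -/
def besov {d : ℕ} (η : Ed d → ℝ) (s t : ℝ) (u : Ed d → ℂ) : ℝ≥0∞ :=
  (∑' j : ℤ, ENNReal.ofReal ((2 : ℝ) ^ (2 * (j : ℝ) * (if j < 0 then s else t))) *
      eLpNorm (LPproj η j u) 2 volume ^ 2) ^ (1 / 2 : ℝ)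

/-- A Littlewood–Paley function: smooth, supported in the annulus `1/2 < |ξ| < 2`,
with dyadic partition of unity property. -/
structure IsLP {d : ℕ} (η : Ed d → ℝ) : Prop where
  smooth : ContDiff ℝ (⊤ : ℕ∞) η
  supp : ∀ ξ : Ed d, η ξ ≠ 0 → ‖ξ‖ ∈ Set.Ioo (1 / 2 : ℝ) 2
  partition : ∀ ξ : Ed d, ξ ≠ 0 → ∑' j : ℤ, η ((2 : ℝ) ^ (-j) • ξ) = 1

/-- Critical regularity `s_c = (d−1)/2`. -/
def sc (d : ℕ) : ℝ := ((d : ℝ) - 1) / 2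

/-- `p_* = 2(d+2)/d`. -/
def pstar (d : ℕ) : ℝ≥0∞ := 2 * ((d : ℝ≥0∞) + 2) / (d : ℝ≥0∞)

/-- The `Θ_Z` norm. -/
def thetaZ {d : ℕ} {Ω : Type*} [MeasurableSpace Ω] (P : Measure Ω)
    (u : ℝ → Ed d → Ω → ℂ) : ℝ≥0∞ :=
  max (max (probSob P ⊤ 2 (sc d) u) (probSob P (pstar d) (pstar d) (sc d) u))
      (max (probLp P (2 * ((d : ℝ≥0∞) + 2)) (2 * ((d : ℝ≥0∞) + 2)) u)
           (probSob P 4 (2 * (d : ℝ≥0∞) / ((d : ℝ≥0∞) - 1)) (sc d) u))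

/-- The `Θ_{V₁}` norm. -/
def thetaV1 {d : ℕ} (η : Ed d → ℝ) (V : ℝ → Ed d → ℂ) : ℝ≥0∞ :=
  max (max (eLp volume 2 (fun t => besov η (-(1 / 2)) (sc d - 1 / 2) (V t)))
           (mixLp (2 * ((d : ℝ≥0∞) + 2)) (2 * ((d : ℝ≥0∞) + 2)) V))
      (mixSob (pstar d) (pstar d) (sc d) V)

/-- The `Θ_{V₂}` norm. -/
def thetaV2 {d : ℕ} (η : Ed d → ℝ) (V : ℝ → Ed d → ℂ) : ℝ≥0∞ :=
  max (max (eLp volume 2 (fun t => besov η (-(1 / 2)) (sc d - 1 / 2) (V t)))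
           (mixLp ((d : ℝ≥0∞) + 2) ((d : ℝ≥0∞) + 2) V))
      (mixSob (2 * ((d : ℝ≥0∞) + 2) / ((d : ℝ≥0∞) + 1))
              (2 * ((d : ℝ≥0∞) + 2) / ((d : ℝ≥0∞) + 1)) (sc d) V)

/-- Integral of a complex function against a finite signed measure (via Jordan decomposition). -/
def sInt {α : Type*} [MeasurableSpace α] (w : MeasureTheory.SignedMeasure α) (f : α → ℂ) : ℂ :=
  (∫ a, f a ∂w.toJordanDecomposition.posPart) - ∫ a, f a ∂w.toJordanDecomposition.negPart

/-- `w⊛(V₁,V₂)(x) = ∫ V₁(x+y₁+y₂) V₂(x+y₂) dw(y₁,y₂)`. -/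
def circAst {d : ℕ} (w : MeasureTheory.SignedMeasure (Ed d × Ed d)) (V₁ V₂ : Ed d → ℂ)
    (x : Ed d) : ℂ :=
  sInt w (fun y => V₁ (x + y.1 + y.2) * V₂ (x + y.2))

/-- Convolution of a finite signed measure with a function: `(μ*V)(x) = ∫ V(x−y) dμ(y)`. -/
def sconv {d : ℕ} (μ : MeasureTheory.SignedMeasure (Ed d)) (V : Ed d → ℂ) (x : Ed d) : ℂ :=
  sInt μ (fun y => V (x - y))

/-- `h = F⁻¹(|f|²)`. -/
def hFun {d : ℕ} (f : Ed d → ℂ) : Ed d → ℂ := invFT (fun ξ => ((‖f ξ‖ ^ 2 : ℝ) : ℂ))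

/-- The Lindhard function `m_f(ω,k) = 2∫₀^∞ e^{−itω} sin(|k|²t) h(2tk) dt`, `m_f(ω,0) = 0`. -/
def lindhard {d : ℕ} (h : Ed d → ℂ) (ω : ℝ) (k : Ed d) : ℂ :=
  if k = 0 then 0 else
    2 * ∫ t in Set.Ioi (0 : ℝ), Complex.exp (-Complex.I * (t : ℂ) * (ω : ℂ)) *
      ((Real.sin (‖k‖ ^ 2 * t) : ℝ) : ℂ) * h ((2 * t) • k)

/-- The regularized Lindhard function
`m_h^γ(ω,k) = 2∫₀^∞ e^{−t(γ+iω)} sin(|k|²t) h(2tk) dt`, `m_h^γ(ω,0) = 0`. -/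
def lindhardG {d : ℕ} (h : Ed d → ℂ) (γ ω : ℝ) (k : Ed d) : ℂ :=
  if k = 0 then 0 else
    2 * ∫ t in Set.Ioi (0 : ℝ), Complex.exp (-(t : ℂ) * ((γ : ℂ) + Complex.I * (ω : ℂ))) *
      ((Real.sin (‖k‖ ^ 2 * t) : ℝ) : ℂ) * h ((2 * t) • k)

/-- Surface measure of the unit sphere `𝕊^{d−1}`, i.e. `d · vol(B(0,1))`. -/
def sphereArea (d : ℕ) : ℝ := d * (volume (Metric.ball (0 : Ed d) 1)).toReal

/-- Spherical symmetry. -/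
def SphSymm {d : ℕ} (f : Ed d → ℂ) : Prop := ∀ x y : Ed d, ‖x‖ = ‖y‖ → f x = f y

/-- Fourier transform of a finite signed measure: `μ̂(k) = ∫ e^{−ik·x} dμ(x)`. -/
def sFourier {d : ℕ} (μ : MeasureTheory.SignedMeasure (Ed d)) (k : Ed d) : ℂ :=
  sInt μ (fun x => Complex.exp (-Complex.I * ((@inner ℝ _ _ x k : ℝ) : ℂ)))

/-- Duhamel term `∫₀^t S(t−τ)F(τ)dτ` (with `∫₀^t = −∫_t^0` for `t < 0`). -/
def duh {d : ℕ} (m : ℝ) (F : ℝ → Ed d → ℂ) (t : ℝ) (x : Ed d) : ℂ :=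
  ∫ τ in (0 : ℝ)..t, Sprop m (t - τ) (F τ) x

/-- Homogeneous `Ḣ^{−1/2}` norm: `(2π)^{−d/2} ‖ |ξ|^{−1/2} ĝ ‖_{L²}`. -/
def hNegHalf {d : ℕ} (g : Ed d → ℂ) : ℝ≥0∞ :=
  ENNReal.ofReal ((2 * Real.pi) ^ (-(d : ℝ) / 2)) *
    eLpNorm (fun ξ : Ed d => ((‖ξ‖ ^ (-(1 / 2) : ℝ) : ℝ) : ℂ) * FT g ξ) 2 volume

end

section AuxLindhard

open MeasureTheory Measure Set Metric

/-- Continuity of the inverse Fourier transform of an integrable function. -/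
lemma invFT_continuous_aux {d : ℕ} {g : Ed d → ℂ} (hg : Integrable g) :
    Continuous (invFT g) := by
  apply Continuous.mul continuous_const
  refine continuous_of_dominated (bound := fun ξ => ‖g ξ‖) ?_ ?_ hg.norm ?_
  · intro x
    exact ((Complex.continuous_exp.comp (continuous_const.mul
      (Complex.continuous_ofReal.comp (Continuous.inner continuous_const
        continuous_id)))).aestronglyMeasurable).mul hg.aestronglyMeasurable
  · intro x
    filter_upwards with ξ
    rw [norm_mul, mul_comm Complex.I, Complex.norm_exp_ofReal_mul_I, one_mul]
  · filter_upwards with ξ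
    exact (Complex.continuous_exp.comp (continuous_const.mul
      (Complex.continuous_ofReal.comp (Continuous.inner continuous_id
        continuous_const)))).mul continuous_const

/-- Spherical symmetry of the inverse Fourier transform of a spherically symmetric function. -/
lemma invFT_sphSymm_aux {d : ℕ} {g : Ed d → ℂ} (hg : SphSymm g) : SphSymm (invFT g) := by
  intro x y hxy
  unfold invFT
  congr 1
  set e : Ed d ≃ₗᵢ[ℝ] Ed d := Submodule.reflection (ℝ ∙ (x - y))ᗮ with he
  have hxy' : e x = y := Submodule.reflection_sub hxy
  have hmp : MeasurePreserving e (volume : Measure (Ed d)) volume :=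
    LinearIsometryEquiv.measurePreserving e
  have hcomp := hmp.integral_comp e.toHomeomorph.measurableEmbedding
      (fun ξ => Complex.exp (Complex.I * ((@inner ℝ _ _ y ξ : ℝ) : ℂ)) * g ξ)
  rw [← hcomp]
  refine integral_congr_ae (Filter.Eventually.of_forall fun ξ => ?_)
  have h1 : (@inner ℝ _ _ y (e ξ) : ℝ) = (@inner ℝ _ _ x ξ : ℝ) := by
    conv_lhs => rw [← hxy']
    exact e.inner_map_map x ξ
  have h2 : g (e ξ) = g ξ := hg _ _ (e.norm_map ξ)
  simp only [h1, h2]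

/-- Polar-coordinate formula for lower integrals of radial functions. -/
lemma lintegral_fun_norm_polar {E : Type*} [NormedAddCommGroup E] [NormedSpace ℝ E]
    [MeasurableSpace E] [BorelSpace E] [FiniteDimensional ℝ E] [Nontrivial E]
    (μ : Measure E) [μ.IsAddHaarMeasure] {F : ℝ → ℝ≥0∞} (hF : Measurable F) :
    ∫⁻ x, F ‖x‖ ∂μ = (Module.finrank ℝ E : ℝ≥0∞) * μ (ball 0 1) *
      ∫⁻ r in Ioi (0 : ℝ), ENNReal.ofReal (r ^ (Module.finrank ℝ E - 1)) * F r := by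
  have hmeas : Measurable fun p : sphere (0 : E) 1 × Ioi (0 : ℝ) => F p.2.1 :=
    hF.comp (measurable_subtype_coe.comp measurable_snd)
  have h1 : ∫⁻ x, F ‖x‖ ∂μ = ∫⁻ x : ({0}ᶜ : Set E), F ‖x.1‖ ∂(μ.comap (↑)) := by
    rw [lintegral_subtype_comap (measurableSet_singleton (0 : E)).compl
      (fun a : E => F ‖a‖), restrict_compl_singleton]
  have h2 := (μ.measurePreserving_homeomorphUnitSphereProd).lintegral_comp hmeas
  have h3 : ∫⁻ x : ({0}ᶜ : Set E), F ‖x.1‖ ∂(μ.comap (↑)) =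
      ∫⁻ x : ({0}ᶜ : Set E), F ((homeomorphUnitSphereProd E x).2 : ℝ) ∂(μ.comap (↑)) := by
    refine lintegral_congr fun x => ?_
    rw [homeomorphUnitSphereProd_apply_snd_coe]
  have h4 : ∫⁻ p : sphere (0 : E) 1 × Ioi (0 : ℝ), F p.2.1
        ∂(μ.toSphere.prod (volumeIoiPow (Module.finrank ℝ E - 1))) =
      μ.toSphere univ * ∫⁻ r : Ioi (0 : ℝ), F r.1 ∂(volumeIoiPow (Module.finrank ℝ E - 1)) := by
    rw [lintegral_prod _ hmeas.aemeasurable,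
      lintegral_const (∫⁻ r : Ioi (0 : ℝ), F r.1 ∂(volumeIoiPow (Module.finrank ℝ E - 1))),
      mul_comm]
  have h5 : ∫⁻ r : Ioi (0 : ℝ), F r.1 ∂(volumeIoiPow (Module.finrank ℝ E - 1)) =
      ∫⁻ r in Ioi (0 : ℝ), ENNReal.ofReal (r ^ (Module.finrank ℝ E - 1)) * F r := by
    rw [volumeIoiPow, lintegral_withDensity_eq_lintegral_mul _
      ((measurable_subtype_coe.pow_const _).ennreal_ofReal)
      (show Measurable fun r : Ioi (0 : ℝ) => F r.1 from hF.comp measurable_subtype_coe)]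
    simp only [Pi.mul_apply]
    exact lintegral_subtype_comap measurableSet_Ioi
      (fun r : ℝ => ENNReal.ofReal (r ^ (Module.finrank ℝ E - 1)) * F r)
  rw [h1, h3, h2, h4, h5, toSphere_apply_univ]

end AuxLindhard

/-- Absolute convergence and uniform bound for the Lindhard function. -/
theorem stmt13 (d : ℕ) (hd : 3 ≤ d) (f : Ed d → ℂ) (hsym : SphSymm f)
    (hL1 : Integrable (fun ξ : Ed d => ‖f ξ‖ ^ 2))
    (hh : Integrable (fun x : Ed d => ‖hFun f x‖ * ‖x‖ ^ (2 - (d : ℝ)))) :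
    ∀ (ω : ℝ) (k : Ed d), k ≠ 0 →
      IntegrableOn (fun t : ℝ => Complex.exp (-Complex.I * (t : ℂ) * (ω : ℂ)) *
          ((Real.sin (‖k‖ ^ 2 * t) : ℝ) : ℂ) * hFun f ((2 * t) • k)) (Set.Ioi 0) ∧
      ‖lindhard (hFun f) ω k‖ ≤ (1 / (2 * sphereArea d)) *
        ∫ x : Ed d, ‖hFun f x‖ * ‖x‖ ^ (2 - (d : ℝ)) := by
  have hd0 : 0 < d := by omega
  haveI : Nontrivial (Ed d) := by
    refine nontrivial_of_ne (EuclideanSpace.single (⟨0, hd0⟩ : Fin d) (1 : ℝ)) 0 fun hcon => ?_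
    have h0 := congrArg (fun v : Ed d => v (⟨0, hd0⟩ : Fin d)) hcon
    simp [EuclideanSpace.single_apply] at h0
  have hg_int : Integrable (fun ξ : Ed d => ((‖f ξ‖ ^ 2 : ℝ) : ℂ)) := hL1.ofReal
  have hcont : Continuous (hFun f) := invFT_continuous_aux hg_int
  have hsymm_h : SphSymm (hFun f) := invFT_sphSymm_aux (fun x y hxy => by rw [hsym x y hxy])
  intro ω k hk
  have hknorm : (0 : ℝ) < ‖k‖ := norm_pos_iff.2 hk
  set u : Ed d := ‖k‖⁻¹ • k with hu_def
  have hu : ‖u‖ = 1 := norm_smul_inv_norm hk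
  set H : ℝ → ℝ := fun r => ‖hFun f (r • u)‖ with hH_def
  have hHcont : Continuous H := (hcont.comp (continuous_id.smul continuous_const)).norm
  have hHnonneg : ∀ r, 0 ≤ H r := fun r => norm_nonneg _
  have key : ∀ x : Ed d, ‖hFun f x‖ = H ‖x‖ := by
    intro x
    have : hFun f x = hFun f (‖x‖ • u) := by
      refine hsymm_h x (‖x‖ • u) ?_
      rw [norm_smul, hu, mul_one, Real.norm_eq_abs, abs_norm]
    rw [hH_def]
    exact congrArg norm this
  -- Surface area constants
  set σe : ℝ≥0∞ := (d : ℝ≥0∞) * volume (Metric.ball (0 : Ed d) 1) with hσe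
  have hballpos : 0 < volume (Metric.ball (0 : Ed d) 1) := Metric.measure_ball_pos _ _ one_pos
  have hballlt : volume (Metric.ball (0 : Ed d) 1) < ⊤ := measure_ball_lt_top
  have hσe0 : σe ≠ 0 := by
    refine mul_ne_zero ?_ hballpos.ne'
    exact_mod_cast Nat.cast_ne_zero.2 hd0.ne'
  have hσetop : σe ≠ ⊤ := ENNReal.mul_ne_top (ENNReal.natCast_ne_top d) hballlt.ne
  have hσ : sphereArea d = σe.toReal := by
    rw [sphereArea, hσe, ENNReal.toReal_mul]
    simp
  have hσpos : 0 < sphereArea d := by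
    rw [hσ]; exact ENNReal.toReal_pos hσe0 hσetop
  -- Polar coordinates
  set F : ℝ → ℝ≥0∞ := fun r => ENNReal.ofReal (H r * r ^ (2 - (d : ℝ))) with hF_def
  have hFmeas : Measurable F := by
    apply Measurable.ennreal_ofReal
    exact hHcont.measurable.mul (by fun_prop)
  have hpolar := lintegral_fun_norm_polar (volume : Measure (Ed d)) hFmeas
  rw [finrank_euclideanSpace_fin] at hpolar
  set A : ℝ≥0∞ := ∫⁻ r in Set.Ioi (0 : ℝ), ENNReal.ofReal (r * H r) with hA
  have hEq1 : ∫⁻ r in Set.Ioi (0 : ℝ), ENNReal.ofReal (r ^ (d - 1)) * F r = A := by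
    rw [hA]
    refine setLIntegral_congr_fun measurableSet_Ioi
      (fun r hr => ?_)
    have hr0 : (0 : ℝ) < r := hr
    have hpow : (r : ℝ) ^ (d - 1 : ℕ) * r ^ (2 - (d : ℝ)) = r := by
      rw [← Real.rpow_natCast r (d - 1), ← Real.rpow_add hr0, Nat.cast_sub (by omega : 1 ≤ d),
        Nat.cast_one]
      rw [show ((d : ℝ) - 1) + (2 - (d : ℝ)) = 1 by ring, Real.rpow_one]
    rw [hF_def, ← ENNReal.ofReal_mul (by positivity)]
    congr 1
    rw [show r ^ (d - 1 : ℕ) * (H r * r ^ (2 - (d : ℝ))) =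
      (r ^ (d - 1 : ℕ) * r ^ (2 - (d : ℝ))) * H r from by ring, hpow]
  have hEqL : ∫⁻ x : Ed d, F ‖x‖ =
      ∫⁻ x : Ed d, ENNReal.ofReal (‖hFun f x‖ * ‖x‖ ^ (2 - (d : ℝ))) := by
    refine lintegral_congr fun x => ?_
    rw [hF_def, key x]
  have hprod : σe * A = ∫⁻ x : Ed d, ENNReal.ofReal (‖hFun f x‖ * ‖x‖ ^ (2 - (d : ℝ))) := by
    rw [← hEqL, hpolar, hEq1, hσe]
  have hfin : ∫⁻ x : Ed d, ENNReal.ofReal (‖hFun f x‖ * ‖x‖ ^ (2 - (d : ℝ))) < ⊤ := by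
    refine lt_of_le_of_lt (lintegral_mono fun x => Real.ofReal_le_enorm _) ?_
    exact hh.hasFiniteIntegral
  have hAfin : A ≠ ⊤ := by
    intro htop
    rw [htop, ENNReal.mul_top hσe0] at hprod
    exact absurd hprod.symm hfin.ne
  have hreal : ∫ x : Ed d, ‖hFun f x‖ * ‖x‖ ^ (2 - (d : ℝ)) = (σe * A).toReal := by
    rw [integral_eq_lintegral_of_nonneg_ae
      (Filter.Eventually.of_forall fun x => by positivity) hh.aestronglyMeasurable, hprod]
  -- The radial profile integral
  set g : ℝ → ℝ := fun r => r * H r with hg_def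
  have hgcont : Continuous g := continuous_id.mul hHcont
  have hgnonneg : ∀ᵐ r ∂(volume.restrict (Set.Ioi (0 : ℝ))), 0 ≤ g r := by
    filter_upwards [ae_restrict_mem measurableSet_Ioi] with r hr
    exact mul_nonneg (le_of_lt hr) (hHnonneg r)
  have hgint : IntegrableOn g (Set.Ioi (0 : ℝ)) := by
    refine ⟨hgcont.aestronglyMeasurable.restrict, ?_⟩
    rw [hasFiniteIntegral_iff_norm]
    have hcongr : ∫⁻ r in Set.Ioi (0 : ℝ), ENNReal.ofReal ‖g r‖ =
        ∫⁻ r in Set.Ioi (0 : ℝ), ENNReal.ofReal (g r) := by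
      refine lintegral_congr_ae ?_
      filter_upwards [hgnonneg] with r hr
      rw [Real.norm_eq_abs, abs_of_nonneg hr]
    rw [hcongr]
    exact lt_of_le_of_lt (le_of_eq rfl) (lt_top_iff_ne_top.2 hAfin)
  set I : ℝ := ∫ r in Set.Ioi (0 : ℝ), g r with hI
  have hI_eq : I = A.toReal := by
    rw [hI, integral_eq_lintegral_of_nonneg_ae hgnonneg hgcont.aestronglyMeasurable.restrict]
  have hRHS : (1 / (2 * sphereArea d)) * ∫ x : Ed d, ‖hFun f x‖ * ‖x‖ ^ (2 - (d : ℝ)) =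
      I / 2 := by
    rw [hreal, ENNReal.toReal_mul, ← hσ, ← hI_eq]
    field_simp
  -- The time integral
  set c : ℝ := 2 * ‖k‖ with hc_def
  have hc : 0 < c := by positivity
  set M : ℝ → ℝ := fun t => (‖k‖ ^ 2 / c) * g (c * t) with hM
  have hMint : IntegrableOn M (Set.Ioi (0 : ℝ)) := by
    have h1 : IntegrableOn (fun t => g (c * t)) (Set.Ioi (0 : ℝ)) := by
      refine (integrableOn_Ioi_comp_mul_left_iff g 0 hc).2 ?_
      rwa [mul_zero]
    exact h1.const_mul _
  have hnormbd : ∀ t ∈ Set.Ioi (0 : ℝ),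
      ‖Complex.exp (-Complex.I * (t : ℂ) * (ω : ℂ)) *
        ((Real.sin (‖k‖ ^ 2 * t) : ℝ) : ℂ) * hFun f ((2 * t) • k)‖ ≤ M t := by
    intro t ht
    have ht0 : (0 : ℝ) < t := ht
    have hexp : ‖Complex.exp (-Complex.I * (t : ℂ) * (ω : ℂ))‖ = 1 := by
      rw [show -Complex.I * (t : ℂ) * (ω : ℂ) = ((-(t * ω) : ℝ) : ℂ) * Complex.I by
        push_cast; ring, Complex.norm_exp_ofReal_mul_I]
    have hnorm_h : ‖hFun f ((2 * t) • k)‖ = H (c * t) := by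
      rw [key, norm_smul, Real.norm_eq_abs, abs_of_pos (by positivity)]
      exact congrArg H (by rw [hc_def]; ring)
    have hsin : |Real.sin (‖k‖ ^ 2 * t)| ≤ ‖k‖ ^ 2 * t :=
      Real.abs_sin_le_abs.trans_eq (abs_of_nonneg (by positivity))
    have hMt : M t = (‖k‖ ^ 2 * t) * H (c * t) := by
      rw [hM, hg_def]
      field_simp
    rw [norm_mul, norm_mul, hexp, one_mul, Complex.norm_real, Real.norm_eq_abs, hnorm_h, hMt]
    exact mul_le_mul_of_nonneg_right hsin (hHnonneg _)
  have haemeas : AEStronglyMeasurable (fun t : ℝ =>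
      Complex.exp (-Complex.I * (t : ℂ) * (ω : ℂ)) *
        ((Real.sin (‖k‖ ^ 2 * t) : ℝ) : ℂ) * hFun f ((2 * t) • k))
      (volume.restrict (Set.Ioi (0 : ℝ))) := by
    refine Continuous.aestronglyMeasurable ?_ |>.restrict
    refine Continuous.mul (Continuous.mul ?_ ?_) ?_
    · exact Complex.continuous_exp.comp
        (((continuous_const.mul Complex.continuous_ofReal).mul continuous_const))
    · exact Complex.continuous_ofReal.comp (Real.continuous_sin.comp (continuous_const.mul continuous_id))
    · exact hcont.comp ((continuous_const.mul continuous_id).smul continuous_const)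
  have hbd_ae : ∀ᵐ (t : ℝ) ∂(volume.restrict (Set.Ioi (0 : ℝ))),
      ‖Complex.exp (-Complex.I * (t : ℂ) * (ω : ℂ)) *
        ((Real.sin (‖k‖ ^ 2 * t) : ℝ) : ℂ) * hFun f ((2 * t) • k)‖ ≤ M t := by
    filter_upwards [ae_restrict_mem measurableSet_Ioi] with t ht
    exact hnormbd t ht
  have hint : IntegrableOn (fun t : ℝ =>
      Complex.exp (-Complex.I * (t : ℂ) * (ω : ℂ)) *
        ((Real.sin (‖k‖ ^ 2 * t) : ℝ) : ℂ) * hFun f ((2 * t) • k)) (Set.Ioi 0) :=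
    hMint.mono' haemeas hbd_ae
  refine ⟨hint, ?_⟩
  have hMval : ∫ t in Set.Ioi (0 : ℝ), M t = I / 4 := by
    have h1 : ∫ t in Set.Ioi (0 : ℝ), g (c * t) = c⁻¹ * I := by
      have := integral_comp_mul_left_Ioi g 0 hc
      rw [mul_zero] at this
      rw [this, smul_eq_mul, hI]
    rw [hM]
    rw [integral_const_mul, h1, hc_def]
    have : ‖k‖ ≠ 0 := hknorm.ne'
    field_simp
    ring
  have hbound : ‖∫ t in Set.Ioi (0 : ℝ),
      Complex.exp (-Complex.I * (t : ℂ) * (ω : ℂ)) *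
        ((Real.sin (‖k‖ ^ 2 * t) : ℝ) : ℂ) * hFun f ((2 * t) • k)‖ ≤ I / 4 := by
    rw [← hMval]
    exact norm_integral_le_of_norm_le hMint hbd_ae
  rw [hRHS]
  simp only [lindhard, if_neg hk]
  rw [norm_mul]
  have h2 : ‖(2 : ℂ)‖ = 2 := by norm_num
  rw [h2]
  linarith
end

section
/- Let d ≥ 1 and let f : ℝ^d → ℂ be spherically symmetric with |f|² ∈ L¹(ℝ^d), and let h = F⁻¹(|f|²), with radial profile h₀ (i.e. h(x) = h₀(|x|)). Assume ∫₀^∞ |h₀(r)| dr < ∞. Then for every ω ∈ ℝ and k ∈ ℝ^d∖{0}, |m_f(ω,k)| ≤ (1/|k|) ∫₀^∞ |h₀(r)| dr; in particular sup_{ω∈ℝ} |m_f(ω,k)| → 0 as |k| → ∞. -/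
open MeasureTheory Filter
open scoped ENNReal NNReal ComplexConjugate Classical

/-- Decay of the Lindhard function at high frequencies. -/
theorem stmt15 (d : ℕ) (hd : 1 ≤ d) (f : Ed d → ℂ) (hsym : SphSymm f)
    (hL1 : Integrable (fun ξ : Ed d => ‖f ξ‖ ^ 2))
    (h₀ : ℝ → ℂ) (hh₀ : ∀ x : Ed d, hFun f x = h₀ ‖x‖)
    (hint : IntegrableOn (fun r : ℝ => ‖h₀ r‖) (Set.Ioi 0)) :
    (∀ (ω : ℝ) (k : Ed d), k ≠ 0 →
      ‖lindhard (hFun f) ω k‖ ≤ (1 / ‖k‖) * ∫ r in Set.Ioi (0 : ℝ), ‖h₀ r‖) ∧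
    Filter.Tendsto (fun k : Ed d => ⨆ ω : ℝ, (‖lindhard (hFun f) ω k‖₊ : ℝ≥0∞))
      (Filter.comap (fun k : Ed d => ‖k‖) Filter.atTop) (nhds 0) := by
  set C : ℝ := ∫ r in Set.Ioi (0 : ℝ), ‖h₀ r‖ with hCdef
  have hC0 : 0 ≤ C := setIntegral_nonneg measurableSet_Ioi (fun r _ => norm_nonneg _)
  have key : ∀ (ω : ℝ) (k : Ed d), k ≠ 0 →
      ‖lindhard (hFun f) ω k‖ ≤ (1 / ‖k‖) * C := by
    intro ω k hk
    have hk0 : (0:ℝ) < ‖k‖ := norm_pos_iff.mpr hk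
    have hb : (0:ℝ) < 2 * ‖k‖ := by positivity
    have hg : IntegrableOn (fun t : ℝ => ‖h₀ (2 * ‖k‖ * t)‖) (Set.Ioi 0) := by
      rw [integrableOn_Ioi_comp_mul_left_iff (fun r => ‖h₀ r‖) 0 hb]
      simpa using hint
    rw [lindhard, if_neg hk, norm_mul]
    have hbound : ‖∫ t in Set.Ioi (0 : ℝ), Complex.exp (-Complex.I * (t : ℂ) * (ω : ℂ)) *
        ((Real.sin (‖k‖ ^ 2 * t) : ℝ) : ℂ) * hFun f ((2 * t) • k)‖ ≤
        ∫ t in Set.Ioi (0:ℝ), ‖h₀ (2 * ‖k‖ * t)‖ := by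
      apply norm_integral_le_of_norm_le hg
      filter_upwards [ae_restrict_mem measurableSet_Ioi] with t ht
      have ht0 : (0:ℝ) < t := ht
      have h1 : hFun f ((2 * t) • k) = h₀ (2 * ‖k‖ * t) := by
        rw [hh₀, norm_smul]
        congr 1
        rw [Real.norm_eq_abs, abs_of_pos (by linarith : (0:ℝ) < 2 * t)]
        ring
      rw [h1, norm_mul, norm_mul]
      have he : ‖Complex.exp (-Complex.I * (t : ℂ) * (ω : ℂ))‖ = 1 := by
        rw [Complex.norm_exp]
        simp [Complex.mul_re]
      have hs : ‖((Real.sin (‖k‖ ^ 2 * t) : ℝ) : ℂ)‖ ≤ 1 := by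
        rw [Complex.norm_real, Real.norm_eq_abs]
        exact abs_le.mpr ⟨Real.neg_one_le_sin _, Real.sin_le_one _⟩
      rw [he, one_mul]
      exact mul_le_of_le_one_left (norm_nonneg _) hs
    have hcv : (∫ t in Set.Ioi (0:ℝ), ‖h₀ (2 * ‖k‖ * t)‖) = (2 * ‖k‖)⁻¹ * C := by
      rw [integral_comp_mul_left_Ioi (fun r => ‖h₀ r‖) 0 hb]
      simp [smul_eq_mul, hCdef]
    have : ‖(2:ℂ)‖ = 2 := by norm_num
    rw [this]
    calc 2 * ‖∫ t in Set.Ioi (0 : ℝ), Complex.exp (-Complex.I * (t : ℂ) * (ω : ℂ)) *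
          ((Real.sin (‖k‖ ^ 2 * t) : ℝ) : ℂ) * hFun f ((2 * t) • k)‖
        ≤ 2 * ((2 * ‖k‖)⁻¹ * C) := by rw [← hcv]; linarith [hbound]
      _ = (1 / ‖k‖) * C := by field_simp
  refine ⟨key, ?_⟩
  have h1 : Tendsto (fun k : Ed d => ‖k‖) (Filter.comap (fun k : Ed d => ‖k‖) Filter.atTop)
      Filter.atTop := tendsto_comap
  have hupper : Tendsto (fun k : Ed d => ENNReal.ofReal ((1 / ‖k‖) * C))
      (Filter.comap (fun k : Ed d => ‖k‖) Filter.atTop) (nhds 0) := by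
    have h2 : Tendsto (fun r : ℝ => (1 / r) * C) Filter.atTop (nhds 0) := by
      simpa using (tendsto_inv_atTop_zero.mul_const C)
    have h3 := (h2.comp h1)
    have := (ENNReal.continuous_ofReal.tendsto 0).comp h3
    rw [ENNReal.ofReal_zero] at this; exact this
  apply tendsto_of_tendsto_of_tendsto_of_le_of_le' tendsto_const_nhds hupper
  · exact Filter.Eventually.of_forall (fun k => zero_le)
  · filter_upwards [h1.eventually (Filter.eventually_ge_atTop 1)] with k hk1
    have hk : k ≠ 0 := by
      intro h; rw [h] at hk1; simp at hk1; linarith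
    refine iSup_le fun ω => ?_
    rw [← norm_toNNReal]
    exact ENNReal.ofReal_le_ofReal (key ω k hk)
end
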